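/- Let φ : Σ_A → ℝ be d-Hölder continuous, let L_φ be the Perron–Frobenius–Ruelle operator, and let λ > 0 and the Borel probability measure μ be the unique pair with ∫ L_φ f dμ = λ ∫ f dμ for all continuous f. Then there exists a unique continuous, strictly positive function h : Σ_A → ℝ such that L_φ h = λ h and ∫_{Σ_A} h dμ = 1. -/

import Mathlib

open MeasureTheory Filter
open scoped ENNReal NNReal

namespace SFT

variable {l : ℕ}

/-- The one-sided subshift of finite type determined by the `l × l` matrix `A`:
infinite sequences with transitions allowed by `A`. -/
abbrev SigmaA (l : ℕ) (A : Matrix (Fin l) (Fin l) ℕ) : Type :=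
  {ω : ℕ → Fin l // ∀ k, A (ω k) (ω (k + 1)) = 1}

/-- The left shift `σ` on `SigmaA l A`. -/
def shift {A : Matrix (Fin l) (Fin l) ℕ} (ω : SigmaA l A) : SigmaA l A :=
  ⟨fun n => ω.1 (n + 1), fun k => ω.2 (k + 1)⟩

/-- Birkhoff sums `S_k φ = ∑_{m<k} φ ∘ σ^m`. -/
def birkhoff {A : Matrix (Fin l) (Fin l) ℕ} (φ : SigmaA l A → ℝ) (k : ℕ) (ω : SigmaA l A) : ℝ :=
  ∑ m ∈ Finset.range k, φ (shift^[m] ω)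

/-- The matrix `A` has `0`-`1` entries and is irreducible and aperiodic
(some power of `A` has all entries strictly positive). -/
def Primitive (A : Matrix (Fin l) (Fin l) ℕ) : Prop :=
  (∀ i j, A i j = 0 ∨ A i j = 1) ∧ ∃ n : ℕ, 0 < n ∧ ∀ i j, 0 < (A ^ n) i j

/-- A finite word is admissible, i.e. belongs to `Σ_A^*`. -/
def Admissible (A : Matrix (Fin l) (Fin l) ℕ) (x : List (Fin l)) : Prop :=
  x ≠ [] ∧ ∀ (i : ℕ) (h : i + 1 < x.length), A (x[i]'(by omega)) (x[i + 1]'h) = 1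

/-- The cylinder set `[x]` of a finite word (the empty word gives all of `Σ_A`). -/
def cylinder (A : Matrix (Fin l) (Fin l) ℕ) (x : List (Fin l)) : Set (SigmaA l A) :=
  {ω | ∀ (i : ℕ) (h : i < x.length), ω.1 i = x[i]'h}

/-- The initial word `(ω_1, …, ω_k)` of `ω`. -/
def wordPrefix {A : Matrix (Fin l) (Fin l) ℕ} (ω : SigmaA l A) (k : ℕ) : List (Fin l) :=
  List.ofFn (fun i : Fin k => ω.1 i)

/-- `μ` is a Gibbs measure for the potential `φ` with pressure `P`:
`c⁻¹ ≤ μ([ω_1,…,ω_k]) / exp(S_kφ(ω) − kP) ≤ c` for some `c > 1`. -/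
def IsGibbs {A : Matrix (Fin l) (Fin l) ℕ} (φ : SigmaA l A → ℝ) (P : ℝ)
    (μ : Measure (SigmaA l A)) : Prop :=
  ∃ c : ℝ, 1 < c ∧ ∀ (ω : SigmaA l A) (k : ℕ), 0 < k →
    c⁻¹ ≤ (μ (cylinder A (wordPrefix ω k))).toReal / Real.exp (birkhoff φ k ω - k * P) ∧
      (μ (cylinder A (wordPrefix ω k))).toReal / Real.exp (birkhoff φ k ω - k * P) ≤ c

/-- `φ` is Hölder continuous with respect to the metric `d(ω,υ) = 2^{-(ω ∧ υ)}`: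
there are `C` and an exponent `s > 0` with `|φ(ω) − φ(υ)| ≤ C ⬝ d(ω,υ)^s`, i.e.
`|φ(ω) − φ(υ)| ≤ C ⬝ 2^{-sn}` whenever `ω` and `υ` agree in their first `n` coordinates. -/
def HolderCont {A : Matrix (Fin l) (Fin l) ℕ} (φ : SigmaA l A → ℝ) : Prop :=
  ∃ C s : ℝ, 0 < s ∧ ∀ (ω υ : SigmaA l A) (n : ℕ),
    (∀ i < n, ω.1 i = υ.1 i) → |φ ω - φ υ| ≤ C * (2 : ℝ) ^ (-(s * n))

/-- Prepending a letter `a` to a sequence `ω` (an admissible preimage of `ω` under the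
shift). -/
def consSeq {A : Matrix (Fin l) (Fin l) ℕ} (a : Fin l) (ω : SigmaA l A)
    (h : A a (ω.1 0) = 1) : SigmaA l A :=
  ⟨fun n => match n with
    | 0 => a
    | (k + 1) => ω.1 k,
   by
    intro k
    match k with
    | 0 => exact h
    | (m + 1) => exact ω.2 m⟩

/-- The Perron-Frobenius-Ruelle operator `(L_φ f)(ω) = ∑_{σ(υ)=ω} e^{φ(υ)} f(υ)`. -/
noncomputable def transferOp (A : Matrix (Fin l) (Fin l) ℕ) (φ : SigmaA l A → ℝ)
    (f : SigmaA l A → ℝ) : SigmaA l A → ℝ := fun ω =>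
  ∑ a : Fin l, if h : A a (ω.1 0) = 1 then
    Real.exp (φ (consSeq a ω h)) * f (consSeq a ω h) else 0
/-! Replacing `φ` by `φ - log λ` divides `L_φ` by `λ`, so we may assume `λ = 1`, i.e. that `μ` is
`L_φ`-invariant. Call `f ≥ 0` `(K, r)`-regular if `f ω ≤ exp (K rᵐ) f υ` whenever `ω` and `υ`
share their first `m ≥ 1` letters. If `|φ ω - φ υ| ≤ C rᵐ` for such pairs, `L_φ` preserves
`(K, r)`-regularity for `K = C r / (1 - r)`. Every one-letter cylinder has positive `μ`-measure,
so the regular `f` with `∫ f dμ = 1` are uniformly bounded, hence equicontinuous, and by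
Arzelà–Ascoli the Cesàro averages of `L_φⁿ 1` have a limit point `h`, which is fixed because
`L_φ` moves the `n`-th average by `O(1/n)`. Primitivity of `A` spreads the positivity of `h` on
one cylinder to all of `Σ_A`. For uniqueness, with `t = min h₁/h₂` the function `h₁ - t h₂ ≥ 0`
is a fixed point vanishing at some `x`, hence on the backward orbit of `x`, which is dense; so
`h₁ = t h₂`, and `t = 1` by integrating. -/

open Function Topology
open scoped BoundedContinuousFunction

theorem _root_.Continuous.integrable_of_compactSpace {X E : Type*} [TopologicalSpace X]
    [CompactSpace X] [MeasurableSpace X] [OpensMeasurableSpace X] [NormedAddCommGroup E]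
    {μ : Measure X} [IsFiniteMeasure μ] {f : X → E} (hf : Continuous f) : Integrable f μ :=
  hf.integrable_of_hasCompactSupport (.of_compactSpace f)

theorem _root_.Module.End.apply_sum_pow_sub_sum_pow {R M : Type*} [Semiring R] [AddCommGroup M]
    [Module R M] (T : Module.End R M) (x : M) (n : ℕ) :
    T (∑ k ∈ Finset.range n, (T ^ k) x) - ∑ k ∈ Finset.range n, (T ^ k) x = (T ^ n) x - x := by
  rw [map_sum, ← Finset.sum_sub_distrib]
  simp_rw [← Module.End.mul_apply, ← pow_succ']
  exact Finset.sum_range_sub (fun k => (T ^ k) x) n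

theorem _root_.Module.End.tendsto_apply_cesaro_sub_cesaro {X : Type*} (T : Module.End ℝ (X → ℝ))
    {x : X → ℝ} {M : ℝ} (hx : ∀ k ω, |(T ^ k) x ω| ≤ M) (ω : X) :
    Tendsto (fun n : ℕ => T (((n : ℝ) + 1)⁻¹ • ∑ k ∈ Finset.range (n + 1), (T ^ k) x) ω -
      (((n : ℝ) + 1)⁻¹ • ∑ k ∈ Finset.range (n + 1), (T ^ k) x) ω) atTop (𝓝 0) := by
  refine squeeze_zero_norm (a := fun n : ℕ => ((n : ℝ) + 1)⁻¹ * (M + M)) (fun n => ?_) ?_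
  · rw [map_smul, ← Pi.sub_apply, ← smul_sub, Module.End.apply_sum_pow_sub_sum_pow, Pi.smul_apply,
      smul_eq_mul, norm_mul, Real.norm_of_nonneg (by positivity)]
    exact mul_le_mul_of_nonneg_left ((norm_sub_le _ _).trans (add_le_add (hx _ ω)
      (by simpa using hx 0 ω))) (by positivity)
  · simpa using (tendsto_one_div_add_atTop_nhds_zero_nat (𝕜 := ℝ)).mul_const (M + M)

variable {A : Matrix (Fin l) (Fin l) ℕ}

section Topology

theorem isClosed_setOf_transitions (A : Matrix (Fin l) (Fin l) ℕ) :
    IsClosed {ω : ℕ → Fin l | ∀ k, A (ω k) (ω (k + 1)) = 1} := by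
  simp only [Set.ofPred_forall]
  exact isClosed_iInter fun k => IsClosed.preimage (f := fun ω : ℕ → Fin l => (ω k, ω (k + 1)))
    (by fun_prop) (isClosed_discrete {p : Fin l × Fin l | A p.1 p.2 = 1})

instance : CompactSpace (SigmaA l A) :=
  isCompact_iff_compactSpace.mp (isClosed_setOf_transitions A).isCompact

theorem continuous_coord (i : ℕ) : Continuous fun ω : SigmaA l A => ω.1 i :=
  (continuous_apply i).comp continuous_subtype_val

theorem isClopen_setOf_head_eq (j : Fin l) : IsClopen {ω : SigmaA l A | ω.1 0 = j} :=
  (isClopen_discrete {j}).preimage (continuous_coord 0)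

theorem eventually_agree (ω : SigmaA l A) (n : ℕ) : ∀ᶠ υ in 𝓝 ω, ∀ i < n, υ.1 i = ω.1 i := by
  simp only [← Finset.mem_range, eventually_all_finset]
  exact fun i _ => (continuous_coord i).continuousAt.eventually_mem (isOpen_discrete {ω.1 i}
    |>.mem_nhds rfl)

theorem tendsto_of_agree {υ : ℕ → SigmaA l A} {ω : SigmaA l A}
    (h : ∀ m, ∀ i < m, (υ m).1 i = ω.1 i) : Tendsto υ atTop (𝓝 ω) := by
  refine tendsto_subtype_rng.2 (tendsto_pi_nhds.2 fun i => tendsto_const_nhds.congr' ?_)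
  exact eventually_atTop.2 ⟨i + 1, fun m hm => (h m i (by omega)).symm⟩

theorem equicontinuous_of_agree {ι : Type*} {F : ι → SigmaA l A → ℝ} {b : ℕ → ℝ}
    (hb : Tendsto b atTop (𝓝 0))
    (hF : ∀ᶠ m in atTop, ∀ i ω υ, (∀ k < m, ω.1 k = υ.1 k) → dist (F i ω) (F i υ) ≤ b m) :
    Equicontinuous F := by
  intro ω
  rw [Metric.equicontinuousAt_iff_right]
  intro ε hε
  obtain ⟨m, hm, hbm⟩ := (hF.and (hb.eventually (gt_mem_nhds hε))).exists
  filter_upwards [eventually_agree ω m] with υ hυ i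
  exact (hm i ω υ fun k hk => (hυ k hk).symm).trans_lt hbm

theorem HolderCont.exists_geometric {φ : SigmaA l A → ℝ} (hφ : HolderCont φ) :
    ∃ C r : ℝ, 0 ≤ C ∧ 0 ≤ r ∧ r < 1 ∧
      ∀ ω υ n, (∀ i < n, ω.1 i = υ.1 i) → |φ ω - φ υ| ≤ C * r ^ n := by
  obtain ⟨C, s, hs, hC⟩ := hφ
  refine ⟨|C|, 2 ^ (-s), abs_nonneg C, by positivity,
    Real.rpow_lt_one_of_one_lt_of_neg one_lt_two (neg_neg_of_pos hs), fun ω υ n h => ?_⟩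
  calc |φ ω - φ υ| ≤ C * 2 ^ (-(s * n)) := hC ω υ n h
    _ ≤ |C| * 2 ^ (-(s * n)) := mul_le_mul_of_nonneg_right (le_abs_self C) (by positivity)
    _ = |C| * (2 ^ (-s)) ^ n := by rw [← Real.rpow_natCast, ← Real.rpow_mul zero_le_two, neg_mul]

theorem HolderCont.continuous {φ : SigmaA l A → ℝ} (hφ : HolderCont φ) : Continuous φ := by
  obtain ⟨C, r, -, hr0, hr1, hC⟩ := hφ.exists_geometric
  refine (equicontinuous_of_agree (F := fun _ : Unit => φ) (b := fun n => C * r ^ n) ?_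
    (.of_forall fun n _ ω υ h => (hC ω υ n h))).continuous ()
  simpa using (tendsto_pow_atTop_nhds_zero_of_lt_one hr0 hr1).const_mul C

theorem HolderCont.sub_const {φ : SigmaA l A → ℝ} (hφ : HolderCont φ) (c : ℝ) :
    HolderCont fun ω => φ ω - c := by
  simpa only [HolderCont, sub_sub_sub_cancel_right] using hφ

end Topology

section TransferOperator

variable {φ : SigmaA l A → ℝ}

@[simp]
theorem shift_consSeq (a : Fin l) (ω : SigmaA l A) (h : A a (ω.1 0) = 1) :
    shift (consSeq a ω h) = ω :=
  rfl

theorem consSeq_head_shift (υ : SigmaA l A) : consSeq (υ.1 0) (shift υ) (υ.2 0) = υ :=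
  Subtype.ext <| funext fun n => by cases n <;> rfl

theorem birkhoff_succ (n : ℕ) (υ : SigmaA l A) :
    birkhoff φ (n + 1) υ = φ υ + birkhoff φ n (shift υ) := by
  simp only [birkhoff, Finset.sum_range_succ', iterate_succ_apply, iterate_zero_apply, add_comm]

theorem continuous_consSeq (a : Fin l) :
    Continuous fun ω : {ω : SigmaA l A // A a (ω.1 0) = 1} => consSeq a ω.1 ω.2 :=
  (continuous_pi fun n => match n with
    | 0 => continuous_const
    | k + 1 => (continuous_coord k).comp continuous_subtype_val).subtype_mk _

theorem continuous_transferOp (hφ : Continuous φ) {f : SigmaA l A → ℝ} (hf : Continuous f) :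
    Continuous (transferOp A φ f) := by
  refine continuous_finsetSum _ fun a _ => continuous_iff_continuousAt.2 fun ω => ?_
  have hS : IsClopen {ω : SigmaA l A | A a (ω.1 0) = 1} :=
    (isClopen_discrete {j | A a j = 1}).preimage (continuous_coord 0)
  by_cases h : A a (ω.1 0) = 1
  · refine ContinuousOn.continuousAt ?_ (hS.isOpen.mem_nhds h)
    rw [continuousOn_iff_continuous_domRestrict]
    refine ((Real.continuous_exp.comp (hφ.comp (continuous_consSeq a))).mul
      (hf.comp (continuous_consSeq a))).congr fun ω => ?_
    simp [dif_pos ω.2]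
  · refine (continuousAt_const (y := (0 : ℝ))).congr ?_
    filter_upwards [hS.compl.isOpen.mem_nhds h] with υ (hυ : ¬A a (υ.1 0) = 1)
    rw [dif_neg hυ]

theorem transferOp_sub_const (c : ℝ) (f : SigmaA l A → ℝ) (ω : SigmaA l A) :
    transferOp A (fun υ => φ υ - c) f ω = Real.exp (-c) * transferOp A φ f ω := by
  simp only [transferOp, Finset.mul_sum]
  refine Finset.sum_congr rfl fun a _ => ?_
  split_ifs
  · rw [sub_eq_add_neg, Real.exp_add]; ring
  · simp

noncomputable def transferOpₗ (A : Matrix (Fin l) (Fin l) ℕ) (φ : SigmaA l A → ℝ) :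
    Module.End ℝ (SigmaA l A → ℝ) where
  toFun := transferOp A φ
  map_add' f g := funext fun ω => by
    simp only [transferOp, Pi.add_apply, ← Finset.sum_add_distrib]
    exact Finset.sum_congr rfl fun a _ => by split_ifs <;> ring
  map_smul' c f := funext fun ω => by
    simp only [transferOp, Pi.smul_apply, smul_eq_mul, RingHom.id_apply, Finset.mul_sum]
    exact Finset.sum_congr rfl fun a _ => by split_ifs <;> ring

@[simp]
theorem coe_transferOpₗ : ⇑(transferOpₗ A φ) = transferOp A φ :=
  rfl

def IsTransferInvariant (A : Matrix (Fin l) (Fin l) ℕ) (φ : SigmaA l A → ℝ)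
    (μ : Measure (SigmaA l A)) : Prop :=
  ∀ f, Continuous f → ∫ ω, transferOp A φ f ω ∂μ = ∫ ω, f ω ∂μ

theorem transferOp_nonneg {f : SigmaA l A → ℝ} (hf : 0 ≤ f) : 0 ≤ transferOp A φ f :=
  fun ω => Finset.sum_nonneg fun a _ => by
    split_ifs
    exacts [mul_nonneg (Real.exp_pos _).le (hf _), le_rfl]

theorem exp_mul_le_transferOp_shift {f : SigmaA l A → ℝ} (hf : 0 ≤ f) (υ : SigmaA l A) :
    Real.exp (φ υ) * f υ ≤ transferOp A φ f (shift υ) := by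
  have h := Finset.single_le_sum (s := Finset.univ) (a := υ.1 0)
    (f := fun a => if h : A a ((shift υ).1 0) = 1 then
      Real.exp (φ (consSeq a (shift υ) h)) * f (consSeq a (shift υ) h) else 0)
    (fun a _ => by
      split_ifs
      exacts [mul_nonneg (Real.exp_pos _).le (hf _), le_rfl]) (Finset.mem_univ _)
  have hυ : A (υ.1 0) ((shift υ).1 0) = 1 := υ.2 0
  simp only [dif_pos hυ, consSeq_head_shift] at h
  exact h

/-- `L_φⁿ f ω` is the sum of `exp (S_n φ υ) f υ` over all `υ` with `σⁿ υ = ω`. -/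
theorem exp_birkhoff_mul_le_transferOp_iterate {f : SigmaA l A → ℝ} (hf : 0 ≤ f) {n : ℕ}
    {υ ω : SigmaA l A} (h : shift^[n] υ = ω) :
    Real.exp (birkhoff φ n υ) * f υ ≤ (transferOp A φ)^[n] f ω := by
  induction n generalizing f υ with
  | zero => simp [birkhoff, ← h]
  | succ n ih =>
    rw [iterate_succ_apply] at h ⊢
    calc Real.exp (birkhoff φ (n + 1) υ) * f υ
        = Real.exp (birkhoff φ n (shift υ)) * (Real.exp (φ υ) * f υ) := by
          rw [birkhoff_succ, Real.exp_add]; ring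
      _ ≤ Real.exp (birkhoff φ n (shift υ)) * transferOp A φ f (shift υ) := by
          gcongr; exact exp_mul_le_transferOp_shift hf υ
      _ ≤ (transferOp A φ)^[n] (transferOp A φ f) ω := ih (transferOp_nonneg hf) h

theorem tendsto_transferOp {ι : Type*} {L : Filter ι} {F : ι → SigmaA l A → ℝ}
    {f : SigmaA l A → ℝ} (hF : ∀ ω, Tendsto (fun i => F i ω) L (𝓝 (f ω))) (ω : SigmaA l A) :
    Tendsto (fun i => transferOp A φ (F i) ω) L (𝓝 (transferOp A φ f ω)) := by
  refine tendsto_finsetSum _ fun a _ => ?_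
  split_ifs
  exacts [(hF _).const_mul _, tendsto_const_nhds]

theorem isFixedPt_of_tendsto {ι : Type*} {L : Filter ι} [L.NeBot] {F : ι → SigmaA l A → ℝ}
    {f : SigmaA l A → ℝ} (hF : ∀ ω, Tendsto (fun i => F i ω) L (𝓝 (f ω)))
    (hfix : ∀ ω, Tendsto (fun i => transferOp A φ (F i) ω - F i ω) L (𝓝 0)) :
    IsFixedPt (transferOp A φ) f :=
  funext fun ω => tendsto_nhds_unique (tendsto_transferOp hF ω) <| by
    simpa using (hfix ω).add (hF ω)

end TransferOperator

section Primitive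

variable {φ : SigmaA l A → ℝ}

theorem exists_head_eq_shift_iterate_eq (h01 : ∀ i j, A i j = 0 ∨ A i j = 1) :
    ∀ {n : ℕ} {j : Fin l} {ω : SigmaA l A}, 0 < (A ^ n) j (ω.1 0) →
      ∃ υ : SigmaA l A, υ.1 0 = j ∧ shift^[n] υ = ω
  | 0, j, ω, h => ⟨ω, by_contra fun hne => by simp [Matrix.one_apply_ne (Ne.symm hne)] at h, rfl⟩
  | n + 1, j, ω, h => by
    rw [pow_succ, Matrix.mul_apply] at h
    obtain ⟨b, -, hb⟩ := Finset.sum_pos_iff.1 h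
    have hbω : A b (ω.1 0) = 1 :=
      (h01 _ _).resolve_left (pos_of_mul_pos_right hb (Nat.zero_le _)).ne'
    obtain ⟨υ, hυj, hυ⟩ := exists_head_eq_shift_iterate_eq h01
      (ω := consSeq b ω hbω) (pos_of_mul_pos_left hb (Nat.zero_le _))
    exact ⟨υ, hυj, by rw [iterate_succ_apply', hυ, shift_consSeq]⟩

theorem exists_agree_shift_iterate_eq :
    ∀ (m : ℕ) (ω y : SigmaA l A), y.1 0 = ω.1 m →
      ∃ υ : SigmaA l A, (∀ i ≤ m, υ.1 i = ω.1 i) ∧ shift^[m] υ = y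
  | 0, _, y, h => ⟨y, fun i hi => by rwa [Nat.le_zero.1 hi], rfl⟩
  | m + 1, ω, y, h => by
    obtain ⟨υ, hυ, hσ⟩ := exists_agree_shift_iterate_eq m (shift ω) y h
    have hω : A (ω.1 0) (υ.1 0) = 1 := by rw [hυ 0 (Nat.zero_le _)]; exact ω.2 0
    refine ⟨consSeq (ω.1 0) υ hω, ?_, by rw [iterate_succ_apply, shift_consSeq, hσ]⟩
    rintro (_ | i) hi
    exacts [rfl, hυ i (by omega)]

theorem Primitive.dense_setOf_shift_iterate_eq (hA : Primitive A) (x : SigmaA l A) :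
    Dense {υ : SigmaA l A | ∃ n, shift^[n] υ = x} := by
  obtain ⟨h01, N, -, hN⟩ := hA
  intro ω
  have : ∀ m, ∃ υ : SigmaA l A, (∀ i < m, υ.1 i = ω.1 i) ∧ ∃ n, shift^[n] υ = x := fun m => by
    obtain ⟨y, hy, hyx⟩ := exists_head_eq_shift_iterate_eq h01 (hN (ω.1 m) (x.1 0))
    obtain ⟨υ, hυ, hυy⟩ := exists_agree_shift_iterate_eq m ω y hy
    exact ⟨υ, fun i hi => hυ i hi.le, N + m, by rw [iterate_add_apply, hυy, hyx]⟩
  choose υ hυω hυx using this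
  exact mem_closure_of_tendsto (tendsto_of_agree hυω) (.of_forall hυx)

theorem Primitive.exists_transferOp_iterate_pos (hA : Primitive A) {f : SigmaA l A → ℝ}
    (hf : 0 ≤ f) {j : Fin l} (hfj : ∀ υ : SigmaA l A, υ.1 0 = j → 0 < f υ) :
    ∃ n, ∀ ω, 0 < (transferOp A φ)^[n] f ω := by
  obtain ⟨h01, n, -, hn⟩ := hA
  refine ⟨n, fun ω => ?_⟩
  obtain ⟨υ, hυj, hυω⟩ := exists_head_eq_shift_iterate_eq h01 (hn j (ω.1 0))
  exact (mul_pos (Real.exp_pos _) (hfj υ hυj)).trans_le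
    (exp_birkhoff_mul_le_transferOp_iterate hf hυω)

/-- `g` vanishes on the backward orbit of `x`, which is dense. -/
theorem Primitive.eq_zero_of_isFixedPt (hA : Primitive A) {g : SigmaA l A → ℝ}
    (hg : Continuous g) (hg0 : 0 ≤ g) (hfix : IsFixedPt (transferOp A φ) g) {x : SigmaA l A}
    (hx : g x = 0) : g = 0 := by
  refine hg.ext_on (hA.dense_setOf_shift_iterate_eq x) continuous_const ?_
  rintro υ ⟨n, hn⟩
  have h := exp_birkhoff_mul_le_transferOp_iterate (φ := φ) hg0 hn
  rw [(hfix.iterate n).eq, hx, ← mul_zero (Real.exp _)] at h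
  exact le_antisymm (le_of_mul_le_mul_left h (Real.exp_pos _)) (hg0 υ)

theorem Primitive.eq_of_isFixedPt (hA : Primitive A) (μ : Measure (SigmaA l A))
    [IsProbabilityMeasure μ] {h₁ h₂ : SigmaA l A → ℝ} (hc₁ : Continuous h₁)
    (hfix₁ : IsFixedPt (transferOp A φ) h₁) (hint₁ : ∫ ω, h₁ ω ∂μ = 1)
    (hc₂ : Continuous h₂) (hpos₂ : ∀ ω, 0 < h₂ ω) (hfix₂ : IsFixedPt (transferOp A φ) h₂)
    (hint₂ : ∫ ω, h₂ ω ∂μ = 1) : h₁ = h₂ := by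
  have := nonempty_of_isProbabilityMeasure μ
  obtain ⟨ω₀, -, hmin⟩ := isCompact_univ.exists_isMinOn Set.univ_nonempty
    (hc₁.div hc₂ fun ω => (hpos₂ ω).ne').continuousOn
  set t := h₁ ω₀ / h₂ ω₀
  -- `h₁ - t • h₂` is a nonnegative fixed point vanishing at `ω₀`.
  have hzero : h₁ - t • h₂ = 0 := by
    refine hA.eq_zero_of_isFixedPt (φ := φ) (x := ω₀) (hc₁.sub (hc₂.const_smul t))
      (fun ω => ?_) ?_ ?_
    · simpa [mul_comm] using (le_div_iff₀ (hpos₂ ω)).1 (hmin (Set.mem_univ ω))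
    · change transferOpₗ A φ _ = _
      rw [map_sub, map_smul, coe_transferOpₗ, hfix₁.eq, hfix₂.eq]
    · simp [t, div_mul_cancel₀ _ (hpos₂ ω₀).ne']
  have ht : t = 1 := by
    have := congrArg (fun g => ∫ ω, g ω ∂μ) hzero
    simp only [Pi.sub_apply, Pi.smul_apply, smul_eq_mul, Pi.zero_apply, integral_zero] at this
    rw [integral_sub hc₁.integrable_of_compactSpace
      (hc₂.integrable_of_compactSpace.const_mul t), integral_const_mul, hint₁, hint₂] at this
    linarith
  rwa [ht, one_smul, sub_eq_zero] at hzero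

end Primitive

section Distortion

variable {K r M : ℝ} {φ : SigmaA l A → ℝ}

def BoundedDistortion (K r : ℝ) (f : SigmaA l A → ℝ) : Prop :=
  ∀ m ≥ 1, ∀ ω υ : SigmaA l A, (∀ i < m, ω.1 i = υ.1 i) → f ω ≤ Real.exp (K * r ^ m) * f υ

theorem boundedDistortion_const (hK : 0 ≤ K) (hr : 0 ≤ r) {c : ℝ} (hc : 0 ≤ c) :
    BoundedDistortion K r fun _ : SigmaA l A => c :=
  fun _ _ _ _ _ => le_mul_of_one_le_left hc (Real.one_le_exp (by positivity))

theorem BoundedDistortion.add {f g : SigmaA l A → ℝ} (hf : BoundedDistortion K r f)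
    (hg : BoundedDistortion K r g) : BoundedDistortion K r (f + g) :=
  fun m hm ω υ h => by simpa [mul_add] using add_le_add (hf m hm ω υ h) (hg m hm ω υ h)

theorem BoundedDistortion.smul {f : SigmaA l A → ℝ} (hf : BoundedDistortion K r f) {c : ℝ}
    (hc : 0 ≤ c) : BoundedDistortion K r (c • f) :=
  fun m hm ω υ h => by
    simpa [mul_left_comm] using mul_le_mul_of_nonneg_left (hf m hm ω υ h) hc

theorem BoundedDistortion.of_tendsto {ι : Type*} {L : Filter ι} [L.NeBot]
    {F : ι → SigmaA l A → ℝ} {f : SigmaA l A → ℝ} (hF : ∀ i, BoundedDistortion K r (F i))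
    (hlim : ∀ ω, Tendsto (fun i => F i ω) L (𝓝 (f ω))) : BoundedDistortion K r f :=
  fun m hm ω υ h =>
    le_of_tendsto_of_tendsto' (hlim ω) ((hlim υ).const_mul _) fun i => hF i m hm ω υ h

/-- The constraint on `K` says that the Hölder variation of `φ` on the new first coordinate,
added to the distortion `K rᵐ⁺¹` inherited from the preimages, stays below `K rᵐ`. -/
theorem BoundedDistortion.transferOp {C : ℝ} (hr : 0 ≤ r)
    (hφ : ∀ ω υ n, (∀ i < n, ω.1 i = υ.1 i) → |φ ω - φ υ| ≤ C * r ^ n)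
    (hK : (C + K) * r ≤ K) {f : SigmaA l A → ℝ} (hf0 : 0 ≤ f) (hf : BoundedDistortion K r f) :
    BoundedDistortion K r (transferOp A φ f) := by
  intro m hm ω υ hωυ
  have hhead : ω.1 0 = υ.1 0 := hωυ 0 hm
  rw [SFT.transferOp, SFT.transferOp, Finset.mul_sum]
  refine Finset.sum_le_sum fun a _ => ?_
  by_cases h : A a (υ.1 0) = 1
  · have h' : A a (ω.1 0) = 1 := hhead ▸ h
    rw [dif_pos h', dif_pos h]
    set x := consSeq a ω h'
    set y := consSeq a υ h
    have hxy : ∀ i < m + 1, x.1 i = y.1 i := by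
      rintro (_ | i) hi
      exacts [rfl, hωυ i (by omega)]
    have hφxy := (abs_le.1 (hφ x y (m + 1) hxy)).2
    have hfx := hf0 x
    calc Real.exp (φ x) * f x
        ≤ Real.exp (φ y + C * r ^ (m + 1)) * (Real.exp (K * r ^ (m + 1)) * f y) := by
          gcongr
          · linarith
          · exact hf (m + 1) (by omega) x y hxy
      _ = Real.exp ((C + K) * r * r ^ m) * (Real.exp (φ y) * f y) := by
          rw [show (C + K) * r * r ^ m = C * r ^ (m + 1) + K * r ^ (m + 1) by ring,
            Real.exp_add, Real.exp_add]
          ring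
      _ ≤ Real.exp (K * r ^ m) * (Real.exp (φ y) * f y) :=
          mul_le_mul_of_nonneg_right (Real.exp_le_exp.2 (by gcongr))
            (mul_nonneg (Real.exp_pos _).le (hf0 y))
  · rw [dif_neg (hhead ▸ h), dif_neg h, mul_zero]

theorem BoundedDistortion.abs_sub_le (hK : 0 ≤ K) (hr : 0 ≤ r) {f : SigmaA l A → ℝ}
    (hf : BoundedDistortion K r f) (hfM : ∀ ω, f ω ≤ M) {m : ℕ} (hm : 1 ≤ m)
    {ω υ : SigmaA l A} (h : ∀ i < m, ω.1 i = υ.1 i) :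
    |f ω - f υ| ≤ M * (Real.exp (K * r ^ m) - 1) := by
  have he : 0 ≤ Real.exp (K * r ^ m) - 1 := sub_nonneg.2 (Real.one_le_exp (by positivity))
  have h₁ := hf m hm ω υ h
  have h₂ := hf m hm υ ω fun i hi => (h i hi).symm
  rw [abs_le]
  constructor <;> nlinarith [mul_nonneg he (sub_nonneg.2 (hfM ω)),
    mul_nonneg he (sub_nonneg.2 (hfM υ))]

theorem equicontinuous_of_boundedDistortion (hK : 0 ≤ K) (hr0 : 0 ≤ r) (hr1 : r < 1)
    {ι : Type*} {F : ι → SigmaA l A → ℝ} (hF : ∀ i, BoundedDistortion K r (F i))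
    (hFM : ∀ i ω, F i ω ≤ M) : Equicontinuous F := by
  refine equicontinuous_of_agree (b := fun m => M * (Real.exp (K * r ^ m) - 1)) ?_
    ((eventually_ge_atTop 1).mono fun m hm i ω υ h =>
      (hF i).abs_sub_le hK hr0 (hFM i) hm h)
  simpa using (((Real.continuous_exp.tendsto _).comp
    ((tendsto_pow_atTop_nhds_zero_of_lt_one hr0 hr1).const_mul K)).sub_const 1).const_mul M

theorem exists_tendsto_subseq_of_boundedDistortion (hK : 0 ≤ K) (hr0 : 0 ≤ r) (hr1 : r < 1)
    {u : ℕ → SigmaA l A → ℝ} (huK : ∀ n, BoundedDistortion K r (u n)) (hu0 : ∀ n, 0 ≤ u n)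
    (huM : ∀ n ω, u n ω ≤ M) :
    ∃ (H : SigmaA l A → ℝ) (ψ : ℕ → ℕ), StrictMono ψ ∧
      ∀ ω, Tendsto (fun k => u (ψ k) ω) atTop (𝓝 (H ω)) := by
  have hu := equicontinuous_of_boundedDistortion hK hr0 hr1 huK huM
  let F : ℕ → SigmaA l A →ᵇ ℝ := fun n => .mkOfCompact ⟨u n, hu.continuous n⟩
  have hF : IsCompact (closure (Set.range F)) := by
    refine BoundedContinuousFunction.arzela_ascoli (Set.Icc 0 M) isCompact_Icc _ ?_ ?_
    · rintro _ ω ⟨n, rfl⟩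
      exact ⟨hu0 n ω, huM n ω⟩
    · have : (fun f : Set.range F => ⇑(f : SigmaA l A →ᵇ ℝ)) = u ∘ Set.rangeSplitting F :=
        funext fun f => by
          conv_lhs => rw [← Set.apply_rangeSplitting F f]
          rfl
      exact this ▸ hu.comp _
  obtain ⟨H, -, ψ, hψ, hlim⟩ := hF.tendsto_subseq fun n => subset_closure (Set.mem_range_self n)
  exact ⟨H, ψ, hψ, fun ω => ((continuous_eval_const ω).tendsto H).comp hlim⟩

theorem BoundedDistortion.measureReal_mul_le_integral {μ : Measure (SigmaA l A)}
    [IsFiniteMeasure μ] {f : SigmaA l A → ℝ} (hf : BoundedDistortion K r f) (hfc : Continuous f)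
    (hf0 : 0 ≤ f) (ω : SigmaA l A) :
    μ.real {υ | υ.1 0 = ω.1 0} * f ω ≤ Real.exp (K * r) * ∫ υ, f υ ∂μ := by
  set S := {υ : SigmaA l A | υ.1 0 = ω.1 0}
  calc μ.real S * f ω = ∫ _ in S, f ω ∂μ := by rw [setIntegral_const, smul_eq_mul]
    _ ≤ ∫ υ in S, Real.exp (K * r) * f υ ∂μ := by
        refine setIntegral_mono_on (integrable_const _).integrableOn
          (hfc.integrable_of_compactSpace.const_mul _).integrableOn
          (isClopen_setOf_head_eq _).isOpen.measurableSet fun υ (hυ : υ.1 0 = ω.1 0) => ?_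
        simpa using hf 1 le_rfl ω υ fun i hi => by rw [Nat.lt_one_iff.1 hi, hυ]
    _ = Real.exp (K * r) * ∫ υ in S, f υ ∂μ := integral_const_mul _ _
    _ ≤ Real.exp (K * r) * ∫ υ, f υ ∂μ := mul_le_mul_of_nonneg_left
        (setIntegral_le_integral hfc.integrable_of_compactSpace (.of_forall hf0))
        (Real.exp_pos _).le

end Distortion

section Existence

variable {K r M : ℝ} {φ : SigmaA l A → ℝ} {μ : Measure (SigmaA l A)}

theorem continuous_transferOp_iterate (hφ : Continuous φ) {f : SigmaA l A → ℝ}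
    (hf : Continuous f) (n : ℕ) : Continuous ((transferOp A φ)^[n] f) := by
  induction n generalizing f with
  | zero => exact hf
  | succ n ih => exact ih (continuous_transferOp hφ hf)

theorem integral_transferOp_iterate (hφ : Continuous φ)
    (hμ : IsTransferInvariant A φ μ) {f : SigmaA l A → ℝ}
    (hf : Continuous f) (n : ℕ) : ∫ ω, (transferOp A φ)^[n] f ω ∂μ = ∫ ω, f ω ∂μ := by
  induction n with
  | zero => rfl
  | succ n ih => rw [iterate_succ_apply', hμ _ (continuous_transferOp_iterate hφ hf n), ih]

theorem Primitive.measureReal_head_pos (hA : Primitive A) (hφ : Continuous φ)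
    [IsProbabilityMeasure μ]
    (hμ : IsTransferInvariant A φ μ) (j : Fin l) :
    0 < μ.real {ω : SigmaA l A | ω.1 0 = j} := by
  have hS := isClopen_setOf_head_eq (A := A) j
  have hχ := hS.continuous_indicator (f := (1 : SigmaA l A → ℝ)) continuous_const
  obtain ⟨n, hn⟩ := hA.exists_transferOp_iterate_pos (φ := φ) (j := j)
    (Set.indicator_nonneg (f := (1 : SigmaA l A → ℝ)) (s := {ω : SigmaA l A | ω.1 0 = j})
      fun _ _ => zero_le_one) fun υ hυ => by simp [hυ]
  rw [← integral_indicator_one hS.isOpen.measurableSet, ← integral_transferOp_iterate hφ hμ hχ n,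
    integral_pos_iff_support_of_nonneg (fun ω => (hn ω).le)
      (continuous_transferOp_iterate hφ hχ n).integrable_of_compactSpace,
    support_eq_univ fun ω => (hn ω).ne']
  simp

def regularDensities (μ : Measure (SigmaA l A)) (K r : ℝ) : Set (SigmaA l A → ℝ) :=
  {f | Continuous f ∧ 0 ≤ f ∧ BoundedDistortion K r f ∧ ∫ ω, f ω ∂μ = 1}

theorem one_mem_regularDensities [IsProbabilityMeasure μ] (hK : 0 ≤ K) (hr : 0 ≤ r) :
    1 ∈ regularDensities μ K r :=
  ⟨continuous_const, zero_le_one, boundedDistortion_const hK hr zero_le_one, by simp⟩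

theorem convex_regularDensities [IsFiniteMeasure μ] : Convex ℝ (regularDensities μ K r) := by
  rintro f ⟨hfc, hf0, hfK, hf⟩ g ⟨hgc, hg0, hgK, hg⟩ a b ha hb hab
  refine ⟨(hfc.const_smul a).add (hgc.const_smul b), add_nonneg (smul_nonneg ha hf0)
    (smul_nonneg hb hg0), (hfK.smul ha).add (hgK.smul hb), ?_⟩
  simp only [Pi.add_apply, Pi.smul_apply, smul_eq_mul]
  rw [integral_add (hfc.integrable_of_compactSpace.const_mul a)
    (hgc.integrable_of_compactSpace.const_mul b), integral_const_mul, integral_const_mul, hf, hg]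
  simpa using hab

theorem HolderCont.exists_mapsTo_regularDensities (hφ : HolderCont φ)
    (hμ : IsTransferInvariant A φ μ) :
    ∃ K r : ℝ, 0 ≤ K ∧ 0 ≤ r ∧ r < 1 ∧
      Set.MapsTo (transferOp A φ) (regularDensities μ K r) (regularDensities μ K r) := by
  obtain ⟨C, r, hC, hr0, hr1, hφr⟩ := hφ.exists_geometric
  have hr : 0 < 1 - r := sub_pos.2 hr1
  -- `K = C r / (1 - r)` solves `(C + K) r = K`.
  refine ⟨C * r / (1 - r), r, by positivity, hr0, hr1, fun f ⟨hfc, hf0, hfK, hf⟩ =>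
    ⟨continuous_transferOp hφ.continuous hfc, transferOp_nonneg hf0,
      hfK.transferOp hr0 hφr (le_of_eq ?_) hf0, (hμ f hfc).trans hf⟩⟩
  field_simp
  ring

theorem Primitive.exists_forall_le_of_mem_regularDensities (hA : Primitive A)
    (hφ : Continuous φ) [IsProbabilityMeasure μ]
    (hμ : IsTransferInvariant A φ μ) (K r : ℝ) :
    ∃ M, ∀ f ∈ regularDensities μ K r, ∀ ω, f ω ≤ M := by
  refine ⟨Real.exp (K * r) * ∑ j, (μ.real {ω : SigmaA l A | ω.1 0 = j})⁻¹,
    fun f ⟨hfc, hf0, hfK, hf⟩ ω => ?_⟩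
  have h := hfK.measureReal_mul_le_integral (μ := μ) hfc hf0 ω
  rw [hf, mul_one, mul_comm, ← le_div_iff₀ (hA.measureReal_head_pos hφ hμ (ω.1 0)),
    div_eq_mul_inv] at h
  exact h.trans (mul_le_mul_of_nonneg_left (Finset.single_le_sum
    (f := fun j => (μ.real {ω : SigmaA l A | ω.1 0 = j})⁻¹)
    (fun j _ => inv_nonneg.2 measureReal_nonneg) (Finset.mem_univ (ω.1 0))) (Real.exp_pos _).le)

theorem mem_regularDensities_of_tendsto [IsFiniteMeasure μ] (hK : 0 ≤ K) (hr0 : 0 ≤ r)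
    (hr1 : r < 1) {F : ℕ → SigmaA l A → ℝ} {f : SigmaA l A → ℝ}
    (hF : ∀ n, F n ∈ regularDensities μ K r) (hFM : ∀ n ω, F n ω ≤ M)
    (hlim : ∀ ω, Tendsto (fun n => F n ω) atTop (𝓝 (f ω))) : f ∈ regularDensities μ K r := by
  have hf0 : 0 ≤ f := fun ω => ge_of_tendsto' (hlim ω) fun n => (hF n).2.1 ω
  have hfM : ∀ ω, f ω ≤ M := fun ω => le_of_tendsto' (hlim ω) fun n => hFM n ω
  have hfK : BoundedDistortion K r f := .of_tendsto (fun n => (hF n).2.2.1) hlim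
  refine ⟨(equicontinuous_of_boundedDistortion (F := fun _ : Unit => f) hK hr0 hr1
    (fun _ => hfK) fun _ => hfM).continuous (), hf0, hfK, tendsto_nhds_unique
    (tendsto_integral_of_dominated_convergence (fun _ => M)
      (fun n => (hF n).1.aestronglyMeasurable) (integrable_const M)
      (fun n => .of_forall fun ω => ?_) (.of_forall hlim)) ?_⟩
  · rw [Real.norm_of_nonneg ((hF n).2.1 ω)]
    exact hFM n ω
  · simpa only [(hF _).2.2.2] using tendsto_const_nhds

theorem Primitive.pos_of_isFixedPt (hA : Primitive A) {f : SigmaA l A → ℝ}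
    (hf : f ∈ regularDensities μ K r) (hfix : IsFixedPt (transferOp A φ) f) (ω : SigmaA l A) :
    0 < f ω := by
  obtain ⟨-, hf0, hfK, hf⟩ := hf
  obtain ⟨ω₁, hω₁⟩ : ∃ ω₁, 0 < f ω₁ := by
    by_contra! h
    have : f = 0 := funext fun ω => le_antisymm (h ω) (hf0 ω)
    simp [this] at hf
  obtain ⟨n, hn⟩ := hA.exists_transferOp_iterate_pos (φ := φ) hf0 (j := ω₁.1 0) fun υ hυ =>
    pos_of_mul_pos_right (hω₁.trans_le (hfK 1 le_rfl ω₁ υ fun i hi => by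
      rw [Nat.lt_one_iff.1 hi, hυ])) (Real.exp_pos _).le
  simpa only [(hfix.iterate n).eq] using hn ω

theorem Primitive.exists_isFixedPt_transferOp (hA : Primitive A) (hφ : HolderCont φ)
    [IsProbabilityMeasure μ]
    (hμ : IsTransferInvariant A φ μ) :
    ∃ h, Continuous h ∧ (∀ ω, 0 < h ω) ∧ IsFixedPt (transferOp A φ) h ∧ ∫ ω, h ω ∂μ = 1 := by
  obtain ⟨K, r, hK, hr0, hr1, hmaps⟩ := hφ.exists_mapsTo_regularDensities hμ
  obtain ⟨M, hM⟩ := hA.exists_forall_le_of_mem_regularDensities hφ.continuous hμ K r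
  have hu : ∀ k, (transferOpₗ A φ ^ k) 1 ∈ regularDensities μ K r := fun k => by
    rw [Module.End.coe_pow, coe_transferOpₗ]
    exact hmaps.iterate k (one_mem_regularDensities hK hr0)
  set g : ℕ → SigmaA l A → ℝ := fun n =>
    ((n : ℝ) + 1)⁻¹ • ∑ k ∈ Finset.range (n + 1), (transferOpₗ A φ ^ k) 1
  have hg : ∀ n, g n ∈ regularDensities μ K r := fun n => by
    simp only [g, Finset.smul_sum]
    refine convex_regularDensities.sum_mem (fun _ _ => by positivity) ?_ fun k _ => hu k
    rw [Finset.sum_const, Finset.card_range, nsmul_eq_mul, Nat.cast_add_one]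
    exact mul_inv_cancel₀ (by positivity)
  obtain ⟨H, ψ, hψ, hlim⟩ := exists_tendsto_subseq_of_boundedDistortion hK hr0 hr1
    (fun n => (hg n).2.2.1) (fun n => (hg n).2.1) fun n => hM _ (hg n)
  have hH := mem_regularDensities_of_tendsto hK hr0 hr1 (fun k => hg (ψ k))
    (fun k => hM _ (hg (ψ k))) hlim
  have hfix : IsFixedPt (transferOp A φ) H := isFixedPt_of_tendsto hlim fun ω =>
    (Module.End.tendsto_apply_cesaro_sub_cesaro (transferOpₗ A φ) (fun k ω => by
      rw [abs_of_nonneg ((hu k).2.1 ω)]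
      exact hM _ (hu k) ω) ω).comp hψ.tendsto_atTop
  exact ⟨H, hH.1, hA.pos_of_isFixedPt hH hfix, hfix, hH.2.2.2⟩

theorem Primitive.existsUnique_isFixedPt_transferOp (hA : Primitive A) (hφ : HolderCont φ)
    (μ : Measure (SigmaA l A)) [IsProbabilityMeasure μ]
    (hμ : IsTransferInvariant A φ μ) :
    ∃! h, Continuous h ∧ (∀ ω, 0 < h ω) ∧ IsFixedPt (transferOp A φ) h ∧
      ∫ ω, h ω ∂μ = 1 := by
  obtain ⟨h, hc, hpos, hfix, hint⟩ := hA.exists_isFixedPt_transferOp hφ hμ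
  exact ⟨h, ⟨hc, hpos, hfix, hint⟩, fun h' ⟨hc', _, hfix', hint'⟩ =>
    hA.eq_of_isFixedPt μ hc' hfix' hint' hc hpos hfix hint⟩

end Existence

theorem transfer_eigenfunction_unique_general
    (A : Matrix (Fin l) (Fin l) ℕ) (hA : Primitive A)
    (φ : SigmaA l A → ℝ) (hφ : HolderCont φ)
    (lam : ℝ) (hlam : 0 < lam) (μ : Measure (SigmaA l A)) [IsProbabilityMeasure μ]
    (heig : ∀ f : SigmaA l A → ℝ, Continuous f →
      ∫ ω, transferOp A φ f ω ∂μ = lam * ∫ ω, f ω ∂μ) :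
    ∃! h : SigmaA l A → ℝ,
      Continuous h ∧ (∀ ω, 0 < h ω) ∧ (∀ ω, transferOp A φ h ω = lam * h ω) ∧
        ∫ ω, h ω ∂μ = 1 := by
  set ψ : SigmaA l A → ℝ := fun υ => φ υ - Real.log lam
  have hL : ∀ f ω, transferOp A ψ f ω = lam⁻¹ * transferOp A φ f ω := fun f ω => by
    rw [transferOp_sub_const, Real.exp_neg, Real.exp_log hlam]
  have hμ : IsTransferInvariant A ψ μ := fun f hf => by
    simp only [hL, integral_const_mul, heig f hf, inv_mul_cancel_left₀ hlam.ne']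
  have hfix : ∀ h : SigmaA l A → ℝ,
      (∀ ω, transferOp A φ h ω = lam * h ω) ↔ IsFixedPt (transferOp A ψ) h := fun h => by
    simp only [IsFixedPt, funext_iff, hL, inv_mul_eq_iff_eq_mul₀ hlam.ne']
  simpa only [hfix] using hA.existsUnique_isFixedPt_transferOp (hφ.sub_const _) μ hμ

/-- For the unique pair `(λ, μ)` with `∫ L_φ f dμ = λ ∫ f dμ` for all
continuous `f`, there is a unique continuous strictly positive `h` with `L_φ h = λ h` and
`∫ h dμ = 1`. -/
theorem transfer_eigenfunction_unique
    (hl : 2 ≤ l) (A : Matrix (Fin l) (Fin l) ℕ) (hA : Primitive A)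
    (φ : SigmaA l A → ℝ) (hφ : HolderCont φ)
    (lam : ℝ) (hlam : 0 < lam) (μ : Measure (SigmaA l A)) [IsProbabilityMeasure μ]
    (heig : ∀ f : SigmaA l A → ℝ, Continuous f →
      ∫ ω, transferOp A φ f ω ∂μ = lam * ∫ ω, f ω ∂μ) :
    ∃! h : SigmaA l A → ℝ,
      Continuous h ∧ (∀ ω, 0 < h ω) ∧ (∀ ω, transferOp A φ h ω = lam * h ω) ∧
        ∫ ω, h ω ∂μ = 1 :=
  transfer_eigenfunction_unique_general A hA φ hφ lam hlam μ heig

end SFT
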